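/- For every integer k ≥ 2, the identity (t/(e^t − 1))^{k−1} · h_{k−2}(e^t − 1) − (−1)^k · (B_{k−1}/(k−1)) · t^{k−1} = (k−2)!·(1 + (−1)^k ∑_{n ≥ k} binom(n−1, k−2) B_n t^n/n!) holds in ℚ[[t]]. (In particular, with x_k = π^{1−k}h_{k−2}(π) − (−1)^k B_{k−1}/(k−1), the series t^{k−1}x_k equals (k−2)! + O(t^k).) -/

import Mathlib

/-!
Write `T = t/(e^t - 1)` and `G_j = T^{j+1} h_j(e^t - 1)`. Differentiating `T (e^t - 1) = t` gives
`t T' = T - T² e^t`, and with the recursion for `h_j` this turns into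
`G_{j+1} = (j+1) G_j - t G_j'`. The operator `(j+1) - t d/dt` multiplies the `n`-th coefficient
by `j + 1 - n`, so starting from `G_0 = T = ∑ B_n t^n/n!`, the `n`-th coefficient of `G_j` is
`(1-n)(2-n)⋯(j-n) B_n/n! = (-1)^j j! binom(n-1, j) B_n/n!` for `n ≥ 1`, and `j!` for `n = 0`.
These vanish for `1 ≤ n ≤ j`, and for `n = j + 1` the coefficient is `(-1)^j B_{j+1}/(j+1)`,
which is the subtracted monomial.
-/

/-- The polynomials `h_j`, defined by `h_0 = 1` and
`h_j = (1+X) * (j * h_{j-1} - X * h_{j-1}')`. -/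
noncomputable def hPoly : ℕ → Polynomial ℤ
  | 0 => 1
  | (j + 1) => (1 + Polynomial.X) *
      ((j + 1 : ℤ) • hPoly j - Polynomial.X * Polynomial.derivative (hPoly j))

open PowerSeries
open scoped Nat

theorem aeval_hPoly_succ {B : Type*} [CommRing B] [Algebra ℤ B] (x : B) (j : ℕ) :
    Polynomial.aeval x (hPoly (j + 1)) =
      (1 + x) * ((j + 1) * Polynomial.aeval x (hPoly j) -
        x * Polynomial.aeval x (Polynomial.derivative (hPoly j))) := by
  simp [hPoly]

theorem coeff_C_mul_sub_X_mul_derivative {R : Type*} [CommRing R] (c : R) (f : R⟦X⟧) (n : ℕ) :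
    coeff n (C c * f - X * d⁄dX R f) = (c - n) * coeff n f := by
  rcases n with _ | m
  · simp
  · rw [map_sub, coeff_C_mul, coeff_succ_X_mul, coeff_derivative]
    push_cast
    ring

theorem eq_bernoulliPowerSeries_of_mul_exp_sub_one {A : Type*} [CommRing A] [IsDomain A]
    [Algebra ℚ A] {T : A⟦X⟧} (hT : T * (exp A - 1) = X) : T = bernoulliPowerSeries A := by
  have hE : (exp A - 1 : A⟦X⟧) ≠ 0 := fun h => by
    simpa [coeff_exp] using congrArg (coeff 1) h
  exact mul_right_cancel₀ hE (by rw [hT, bernoulliPowerSeries_mul_exp_sub_one])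

theorem Nat.cast_choose_succ_right_mul {K : Type*} [CommRing K] (m j : ℕ) :
    (m.choose (j + 1) : K) * (j + 1) = m.choose j * (m - j) := by
  rcases le_or_gt j m with hjm | hmj
  · rw [← Nat.cast_sub hjm, ← Nat.cast_succ, ← Nat.cast_mul, ← Nat.cast_mul,
      Nat.choose_succ_right_eq]
  · simp [Nat.choose_eq_zero_of_lt hmj, Nat.choose_eq_zero_of_lt (hmj.trans (Nat.lt_succ_self j))]

section

variable (A : Type*) [CommRing A] [Algebra ℚ A]

noncomputable def hSeries (j : ℕ) : A⟦X⟧ :=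
  bernoulliPowerSeries A ^ (j + 1) * Polynomial.aeval (exp A - 1) (hPoly j)

theorem derivative_aeval_exp_sub_one (p : Polynomial ℤ) :
    d⁄dX A (Polynomial.aeval (exp A - 1) p) =
      Polynomial.aeval (exp A - 1) (Polynomial.derivative p) * exp A := by
  have := ((d⁄dX A).restrictScalars ℤ).map_aeval p (exp A - 1)
  simp only [Derivation.coe_restrictScalars] at this
  rw [this, map_sub, derivative_exp, Derivation.map_one_eq_zero, sub_zero, smul_eq_mul]

theorem X_mul_derivative_bernoulliPowerSeries :
    X * d⁄dX A (bernoulliPowerSeries A) =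
      bernoulliPowerSeries A - bernoulliPowerSeries A ^ 2 * exp A := by
  set T := bernoulliPowerSeries A
  have hT : T * (exp A - 1) = X := bernoulliPowerSeries_mul_exp_sub_one A
  have hD : d⁄dX A T * (exp A - 1) + T * exp A = 1 := by
    simpa [derivative_exp, mul_comm, add_comm] using congrArg (d⁄dX A) hT
  linear_combination T * hD - d⁄dX A T * hT

theorem hSeries_succ (j : ℕ) :
    hSeries A (j + 1) = C ((j : A) + 1) * hSeries A j - X * d⁄dX A (hSeries A j) := by
  have hT := bernoulliPowerSeries_mul_exp_sub_one A
  have hDT := X_mul_derivative_bernoulliPowerSeries A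
  simp only [hSeries, aeval_hPoly_succ, Derivation.leibniz, Derivation.leibniz_pow,
    derivative_aeval_exp_sub_one, smul_eq_mul, nsmul_eq_mul, map_add, map_one, map_natCast,
    Nat.add_sub_cancel, Nat.cast_succ]
  linear_combination (j + 1 : A⟦X⟧) * bernoulliPowerSeries A ^ j *
      Polynomial.aeval (exp A - 1) (hPoly j) * hDT -
    bernoulliPowerSeries A ^ (j + 1) * exp A *
      Polynomial.aeval (exp A - 1) (Polynomial.derivative (hPoly j)) * hT

theorem hSeries_zero : hSeries A 0 = bernoulliPowerSeries A := by
  simp [hSeries, hPoly]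

end

theorem coeff_zero_hSeries (j : ℕ) : coeff 0 (hSeries ℚ j) = j ! := by
  induction j with
  | zero => simp [hSeries_zero, bernoulliPowerSeries]
  | succ j ih =>
    rw [hSeries_succ, coeff_C_mul_sub_X_mul_derivative, ih, Nat.factorial_succ]
    push_cast
    ring

theorem coeff_hSeries (j : ℕ) {n : ℕ} (hn : n ≠ 0) :
    coeff n (hSeries ℚ j) = (-1) ^ j * j ! * (n - 1).choose j * bernoulli n / n ! := by
  obtain ⟨m, rfl⟩ : ∃ m, n = m + 1 := ⟨n - 1, by omega⟩
  induction j with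
  | zero => simp [hSeries_zero, bernoulliPowerSeries]
  | succ j ih =>
    rw [hSeries_succ, coeff_C_mul_sub_X_mul_derivative, ih, Nat.factorial_succ j]
    have := Nat.cast_choose_succ_right_mul (K := ℚ) m j
    push_cast
    linear_combination (-1) ^ j * j ! * bernoulli (m + 1) / (m + 1)! * this

theorem coeff_succ_hSeries_self (j : ℕ) :
    coeff (j + 1) (hSeries ℚ j) = (-1) ^ j * bernoulli (j + 1) / (j + 1) := by
  rw [coeff_hSeries j (Nat.add_one_ne_zero j), Nat.add_sub_cancel, Nat.choose_self,
    Nat.factorial_succ]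
  push_cast
  field_simp

/-- For `k ≥ 2`,
`(t/(e^t-1))^{k-1} h_{k-2}(e^t-1) - (-1)^k (B_{k-1}/(k-1)) t^{k-1}
  = (k-2)! (1 + (-1)^k ∑_{n ≥ k} binom(n-1, k-2) Bₙ tⁿ/n!)`.
Here `T` denotes `t/(e^t-1)`, the unique power series with `T * (e^t-1) = t`. -/
theorem t_pow_xk_expansion (k : ℕ) (hk : 2 ≤ k) (T : PowerSeries ℚ)
    (hT : T * (PowerSeries.exp ℚ - 1) = PowerSeries.X) :
    T ^ (k - 1) * Polynomial.aeval (PowerSeries.exp ℚ - 1) (hPoly (k - 2)) -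
        (PowerSeries.C (R := ℚ)) ((-1) ^ k * _root_.bernoulli (k - 1) / ((k : ℚ) - 1)) *
          (PowerSeries.X : PowerSeries ℚ) ^ (k - 1) =
      PowerSeries.mk (fun n =>
        if n = 0 then ((k - 2).factorial : ℚ)
        else if k ≤ n then
          ((k - 2).factorial : ℚ) * (-1) ^ k * ((n - 1).choose (k - 2) : ℚ) *
            _root_.bernoulli n / (n.factorial : ℚ)
        else 0) := by
  obtain ⟨j, rfl⟩ : ∃ j, k = j + 2 := ⟨k - 2, by omega⟩
  rw [eq_bernoulliPowerSeries_of_mul_exp_sub_one hT, Nat.add_sub_cancel,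
    show j + 2 - 1 = j + 1 by omega, ← hSeries]
  ext n
  rw [map_sub, coeff_mk, coeff_C_mul, coeff_X_pow]
  rcases eq_or_ne n 0 with rfl | hn
  · simp [coeff_zero_hSeries]
  rw [if_neg hn]
  rcases lt_trichotomy n (j + 1) with hlt | rfl | hgt
  · simp [coeff_hSeries j hn, Nat.choose_eq_zero_of_lt (show n - 1 < j by omega), hlt.ne,
      show ¬ j + 2 ≤ n by omega]
  · rw [coeff_succ_hSeries_self, if_pos rfl, if_neg (by omega)]
    push_cast
    ring
  · simp [coeff_hSeries j hn, hgt.ne', show j + 2 ≤ n by omega, pow_add]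
    ring
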